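/- Strong duality for discrete optimal stopping: for every 𝓕-martingale M and every 0 ≤ n ≤ N, Y*_n ≤ 𝔼[ max_{n ≤ m ≤ N} (G_m − M_m + M_n) | 𝓕_n ] ℙ-a.s., and for the Doob martingale M* of the Snell envelope equality holds: Y*_n = 𝔼[ max_{n ≤ m ≤ N} (G_m − M*_m + M*_n) | 𝓕_n ] ℙ-a.s.; hence the conditional infimum of the dual upper bounds over all 𝓕-martingales equals the Snell envelope and is attained. -/

import Mathlib

/-!
For any martingale `M`, backward induction gives
`Y k - M k ≤ 𝔼[max_{k ≤ m ≤ N} (G m - M m) | ℱ k]`: both `G k - M k` and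
`𝔼[Y (k+1) | ℱ k] - M k = 𝔼[Y (k+1) - M (k+1) | ℱ k]` lie below the right-hand side, the latter
by the induction hypothesis and the tower property. For the Doob martingale `M*` of `Y` the
increments of `Y - M*` are `𝔼[Y (k+1) | ℱ k] - Y k ≤ 0`, so pathwise
`G m - M* m + M* n ≤ Y m - M* m + M* n ≤ Y n` for `n ≤ m ≤ N`, which gives the reverse inequality.
-/

open MeasureTheory Filter

/-- A finite-horizon martingale with respect to the filtration `ℱ` up to time `N`:
an adapted, integrable process with the one-step martingale property. -/
def IsFinMartingale {Ω : Type*} {m0 : MeasurableSpace Ω} (μ : Measure Ω)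
    (ℱ : Filtration ℕ m0) (N : ℕ) (M : ℕ → Ω → ℝ) : Prop :=
  (∀ n, n ≤ N → StronglyMeasurable[ℱ n] (M n)) ∧
  (∀ n, n ≤ N → Integrable (M n) μ) ∧
  ∀ n, n < N → μ[M (n + 1)|ℱ n] =ᵐ[μ] M n

theorem Nat.sup'_Icc_eq_sup_sup'_Icc_add_one {β : Type*} [SemilatticeSup β] {a b : ℕ} (h : a < b)
    (f : ℕ → β) :
    (Finset.Icc a b).sup' (Finset.nonempty_Icc.mpr h.le) f =
      f a ⊔ (Finset.Icc (a + 1) b).sup' (Finset.nonempty_Icc.mpr h) f := by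
  rw [← Finset.sup'_insert]
  exact Finset.sup'_congr _ (Finset.insert_Icc_add_one_left_eq_Icc h.le).symm fun _ _ => rfl

namespace MeasureTheory

variable {Ω : Type*} {m0 : MeasurableSpace Ω} {μ : Measure Ω}

theorem Integrable.finset_sup' {ι β : Type*}
    [NormedAddCommGroup β] [Lattice β] [HasSolidNorm β] [IsOrderedAddMonoid β]
    {s : Finset ι} (hs : s.Nonempty) {f : ι → Ω → β} (hf : ∀ i ∈ s, Integrable (f i) μ) :
    Integrable (fun ω => s.sup' hs fun i => f i ω) μ := by
  simp_rw [← Finset.sup'_apply]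
  exact Finset.sup'_induction (p := fun g => Integrable g μ) hs f (fun _ hf _ hg => hf.sup hg) hf

section CondExpOrder

variable {E : Type*} [NormedAddCommGroup E] [NormedSpace ℝ E] [CompleteSpace E] [PartialOrder E]
  [ClosedIciTopology E] [IsOrderedAddMonoid E] [IsOrderedModule ℝ E]
  {m : MeasurableSpace Ω} {f g : Ω → E}

theorem le_condExp_of_le (hm : m ≤ m0) [SigmaFinite (μ.trim hm)] (hg : StronglyMeasurable[m] g)
    (hgi : Integrable g μ) (hf : Integrable f μ) (hgf : g ≤ᵐ[μ] f) : g ≤ᵐ[μ] μ[f|m] :=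
  condExp_of_stronglyMeasurable hm hg hgi ▸ condExp_mono hgi hf hgf

theorem condExp_le_of_le (hm : m ≤ m0) [SigmaFinite (μ.trim hm)] (hg : StronglyMeasurable[m] g)
    (hgi : Integrable g μ) (hf : Integrable f μ) (hfg : f ≤ᵐ[μ] g) : μ[f|m] ≤ᵐ[μ] g :=
  condExp_of_stronglyMeasurable hm hg hgi ▸ condExp_mono hf hgi hfg

end CondExpOrder

end MeasureTheory

section SnellEnvelope

variable {Ω : Type*} {m0 : MeasurableSpace Ω} {μ : Measure Ω} {ℱ : Filtration ℕ m0} {N : ℕ}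
  {G Y : ℕ → Ω → ℝ}

def IsSnellEnvelope (μ : Measure Ω) (ℱ : Filtration ℕ m0) (N : ℕ) (G Y : ℕ → Ω → ℝ) : Prop :=
  (∀ ω, Y N ω = G N ω) ∧ ∀ n < N, ∀ ω, Y n ω = max (G n ω) ((μ[Y (n + 1)|ℱ n]) ω)

noncomputable def doobMartingale (μ : Measure Ω) (ℱ : Filtration ℕ m0) (Y : ℕ → Ω → ℝ) (n : ℕ)
    (ω : Ω) : ℝ :=
  ∑ m ∈ Finset.Icc 1 n, (Y m ω - (μ[Y m|ℱ (m - 1)]) ω)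

theorem doobMartingale_succ (k : ℕ) :
    doobMartingale μ ℱ Y (k + 1) = doobMartingale μ ℱ Y k + (Y (k + 1) - μ[Y (k + 1)|ℱ k]) := by
  funext ω
  simp only [doobMartingale, Finset.sum_Icc_succ_top (Nat.le_add_left 1 k), Nat.add_sub_cancel,
    Pi.add_apply, Pi.sub_apply]

theorem isFinMartingale_doobMartingale [SigmaFiniteFiltration μ ℱ]
    (hYsm : ∀ k ≤ N, StronglyMeasurable[ℱ k] (Y k)) (hYint : ∀ k ≤ N, Integrable (Y k) μ) :
    IsFinMartingale μ ℱ N (doobMartingale μ ℱ Y) := by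
  have hsm : ∀ k ≤ N, StronglyMeasurable[ℱ k] (doobMartingale μ ℱ Y k) := fun k hk =>
    Finset.stronglyMeasurable_fun_sum _ fun m hm => by
      obtain ⟨-, hmk⟩ := Finset.mem_Icc.1 hm
      exact ((hYsm m (hmk.trans hk)).mono (ℱ.mono hmk)).sub
        (stronglyMeasurable_condExp.mono (ℱ.mono ((Nat.sub_le m 1).trans hmk)))
  have hint : ∀ k ≤ N, Integrable (doobMartingale μ ℱ Y k) μ := fun k hk =>
    integrable_finsetSum _ fun m hm =>
      (hYint m ((Finset.mem_Icc.1 hm).2.trans hk)).sub integrable_condExp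
  refine ⟨hsm, hint, fun k hk => ?_⟩
  rw [doobMartingale_succ]
  have hYk := hYint (k + 1) hk
  filter_upwards [condExp_add (hint k hk.le) (hYk.sub integrable_condExp) (ℱ k),
    condExp_sub hYk (integrable_condExp (f := Y (k + 1))) (ℱ k)] with ω hsum hdiff
  rw [hsum, Pi.add_apply, hdiff, Pi.sub_apply,
    condExp_of_stronglyMeasurable (ℱ.le k) (hsm k hk.le) (hint k hk.le),
    condExp_of_stronglyMeasurable (ℱ.le k) stronglyMeasurable_condExp integrable_condExp]
  ring

namespace IsSnellEnvelope

theorem payoff_le (hY : IsSnellEnvelope μ ℱ N G Y) {k : ℕ} (hk : k ≤ N) (ω : Ω) :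
    G k ω ≤ Y k ω := by
  rcases hk.lt_or_eq with hk | rfl
  · exact (hY.2 k hk ω).symm ▸ le_max_left _ _
  · exact (hY.1 ω).ge

theorem condExp_succ_le (hY : IsSnellEnvelope μ ℱ N G Y) {k : ℕ} (hk : k < N) (ω : Ω) :
    (μ[Y (k + 1)|ℱ k]) ω ≤ Y k ω :=
  (hY.2 k hk ω).symm ▸ le_max_right _ _

theorem stronglyMeasurable (hY : IsSnellEnvelope μ ℱ N G Y) (hG : Adapted ℱ G) {k : ℕ}
    (hk : k ≤ N) : StronglyMeasurable[ℱ k] (Y k) := by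
  induction hk using Nat.decreasingInduction with
  | self => exact funext hY.1 ▸ (hG N).stronglyMeasurable
  | of_succ k hk _ =>
    rw [show Y k = _ from funext (hY.2 k hk)]
    exact ((hG k).max stronglyMeasurable_condExp.measurable).stronglyMeasurable

theorem integrable (hY : IsSnellEnvelope μ ℱ N G Y) (hG : ∀ k ≤ N, Integrable (G k) μ) {k : ℕ}
    (hk : k ≤ N) : Integrable (Y k) μ := by
  induction hk using Nat.decreasingInduction with
  | self => exact funext hY.1 ▸ hG N le_rfl
  | of_succ k hk _ =>
    rw [show Y k = _ from funext (hY.2 k hk)]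
    exact (hG k hk.le).sup integrable_condExp

theorem sub_doobMartingale_le (hY : IsSnellEnvelope μ ℱ N G Y) {n m : ℕ} (hnm : n ≤ m)
    (hm : m ≤ N) (ω : Ω) :
    Y m ω - doobMartingale μ ℱ Y m ω ≤ Y n ω - doobMartingale μ ℱ Y n ω := by
  induction m, hnm using Nat.le_induction with
  | base => exact le_rfl
  | succ m _ ih =>
    have hdrop := hY.condExp_succ_le hm ω
    rw [doobMartingale_succ, Pi.add_apply, Pi.sub_apply]
    linarith [ih (Nat.le_of_succ_le hm)]

theorem sup'_sub_doobMartingale_le (hY : IsSnellEnvelope μ ℱ N G Y) {n : ℕ} (hn : n ≤ N)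
    (ω : Ω) :
    (Finset.Icc n N).sup' (Finset.nonempty_Icc.mpr hn)
      (fun m => G m ω - doobMartingale μ ℱ Y m ω + doobMartingale μ ℱ Y n ω) ≤ Y n ω :=
  Finset.sup'_le _ _ fun m hm => by
    obtain ⟨hnm, hmN⟩ := Finset.mem_Icc.1 hm
    linarith [hY.payoff_le hmN ω, hY.sub_doobMartingale_le hnm hmN ω]

variable [SigmaFiniteFiltration μ ℱ] {M : ℕ → Ω → ℝ}

theorem sub_le_condExp_sup' (hY : IsSnellEnvelope μ ℱ N G Y) (hG : Adapted ℱ G)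
    (hGint : ∀ k ≤ N, Integrable (G k) μ) (hM : IsFinMartingale μ ℱ N M) {k : ℕ} (hk : k ≤ N) :
    Y k - M k ≤ᵐ[μ] μ[fun ω => (Finset.Icc k N).sup' (Finset.nonempty_Icc.mpr hk)
      (fun m => G m ω - M m ω)|ℱ k] := by
  obtain ⟨hMsm, hMint, hMmart⟩ := hM
  have hGMsm : ∀ j ≤ N, StronglyMeasurable[ℱ j] (G j - M j) := fun j hj =>
    (hG j).stronglyMeasurable.sub (hMsm j hj)
  have hGMint : ∀ j ≤ N, Integrable (G j - M j) μ := fun j hj => (hGint j hj).sub (hMint j hj)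
  have hZint : ∀ j (hj : j ≤ N), Integrable (fun ω => (Finset.Icc j N).sup'
      (Finset.nonempty_Icc.mpr hj) (fun m => G m ω - M m ω)) μ := fun j hj =>
    Integrable.finset_sup' _ fun i hi => hGMint i (Finset.mem_Icc.1 hi).2
  induction hk using Nat.decreasingInduction with
  | self =>
    simp only [Finset.Icc_self, Finset.sup'_singleton, show Y N = G N from funext hY.1]
    exact le_condExp_of_le (ℱ.le N) (hGMsm N le_rfl) (hGMint N le_rfl) (hGMint N le_rfl)
      EventuallyLE.rfl
  | of_succ k hk ih =>
    set Z := fun ω => (Finset.Icc k N).sup' (Finset.nonempty_Icc.mpr hk.le)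
      (fun m => G m ω - M m ω)
    set Z1 := fun ω => (Finset.Icc (k + 1) N).sup' (Finset.nonempty_Icc.mpr hk)
      (fun m => G m ω - M m ω)
    have hsplit : ∀ ω, Z ω = max (G k ω - M k ω) (Z1 ω) := fun ω =>
      Nat.sup'_Icc_eq_sup_sup'_Icc_add_one hk _
    have hstop : G k - M k ≤ᵐ[μ] μ[Z|ℱ k] :=
      le_condExp_of_le (ℱ.le k) (hGMsm k hk.le) (hGMint k hk.le) (hZint k hk.le)
        (Eventually.of_forall fun ω => (hsplit ω).symm ▸ le_max_left _ _)
    have hcontinue : μ[Y (k + 1)|ℱ k] - M k ≤ᵐ[μ] μ[Z|ℱ k] :=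
      calc μ[Y (k + 1)|ℱ k] - M k
          =ᵐ[μ] μ[Y (k + 1)|ℱ k] - μ[M (k + 1)|ℱ k] := EventuallyEq.rfl.sub (hMmart k hk).symm
        _ =ᵐ[μ] μ[Y (k + 1) - M (k + 1)|ℱ k] :=
          (condExp_sub (hY.integrable hGint hk) (hMint (k + 1) hk) _).symm
        _ ≤ᵐ[μ] μ[μ[Z1|ℱ (k + 1)]|ℱ k] :=
          condExp_mono ((hY.integrable hGint hk).sub (hMint (k + 1) hk)) integrable_condExp ih
        _ =ᵐ[μ] μ[Z1|ℱ k] := condExp_condExp_of_le (ℱ.mono k.le_succ) (ℱ.le (k + 1))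
        _ ≤ᵐ[μ] μ[Z|ℱ k] := condExp_mono (hZint (k + 1) hk) (hZint k hk.le)
          (Eventually.of_forall fun ω => (hsplit ω).symm ▸ le_max_right _ _)
    filter_upwards [hstop, hcontinue] with ω hstop hcontinue
    simp only [Pi.sub_apply] at hstop hcontinue ⊢
    rw [hY.2 k hk ω, ← max_sub_sub_right]
    exact max_le hstop hcontinue

theorem le_condExp_sup' (hY : IsSnellEnvelope μ ℱ N G Y) (hG : Adapted ℱ G)
    (hGint : ∀ k ≤ N, Integrable (G k) μ) (hM : IsFinMartingale μ ℱ N M) {n : ℕ} (hn : n ≤ N) :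
    Y n ≤ᵐ[μ] μ[fun ω => (Finset.Icc n N).sup' (Finset.nonempty_Icc.mpr hn)
      (fun m => G m ω - M m ω + M n ω)|ℱ n] := by
  have hZint : Integrable (fun ω => (Finset.Icc n N).sup' (Finset.nonempty_Icc.mpr hn)
      (fun m => G m ω - M m ω)) μ :=
    Integrable.finset_sup' _ fun i hi => (hGint i (Finset.mem_Icc.1 hi).2).sub
      (hM.2.1 i (Finset.mem_Icc.1 hi).2)
  have hshift : (fun ω => (Finset.Icc n N).sup' (Finset.nonempty_Icc.mpr hn)
      (fun m => G m ω - M m ω + M n ω)) = (fun ω => (Finset.Icc n N).sup'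
      (Finset.nonempty_Icc.mpr hn) (fun m => G m ω - M m ω)) + M n :=
    funext fun ω => (Finset.sup'_add _ _ _ _).symm
  rw [hshift]
  filter_upwards [hY.sub_le_condExp_sup' hG hGint hM hn,
    condExp_add hZint (hM.2.1 n hn) (ℱ n)] with ω hsub hadd
  rw [hadd, Pi.add_apply, condExp_of_stronglyMeasurable (ℱ.le n) (hM.1 n hn) (hM.2.1 n hn)]
  simp only [Pi.sub_apply] at hsub
  linarith

end IsSnellEnvelope

end SnellEnvelope

theorem strong_duality_general
    {Ω : Type*} {m0 : MeasurableSpace Ω} {μ : Measure Ω} [IsProbabilityMeasure μ]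
    (N : ℕ) (ℱ : Filtration ℕ m0)
    (G : ℕ → Ω → ℝ) (hGadapted : Adapted ℱ G) (hGint : ∀ n, Integrable (G n) μ)
    (Y : ℕ → Ω → ℝ)
    (hYN : ∀ ω, Y N ω = G N ω)
    (hYrec : ∀ n, n < N → ∀ ω, Y n ω = max (G n ω) ((μ[Y (n + 1)|ℱ n]) ω))
    (Mstar : ℕ → Ω → ℝ)
    (hMstar : ∀ n ω, Mstar n ω = ∑ m ∈ Finset.Icc 1 n, (Y m ω - (μ[Y m|ℱ (m - 1)]) ω))
    (n : ℕ) (hn : n ≤ N) :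
    (∀ M : ℕ → Ω → ℝ, IsFinMartingale μ ℱ N M →
      Y n ≤ᵐ[μ]
        μ[fun ω => (Finset.Icc n N).sup' (Finset.nonempty_Icc.mpr hn)
          (fun m => G m ω - M m ω + M n ω)|ℱ n]) ∧
    Y n =ᵐ[μ]
      μ[fun ω => (Finset.Icc n N).sup' (Finset.nonempty_Icc.mpr hn)
        (fun m => G m ω - Mstar m ω + Mstar n ω)|ℱ n] := by
  obtain rfl : Mstar = doobMartingale μ ℱ Y := funext₂ hMstar
  have hY : IsSnellEnvelope μ ℱ N G Y := ⟨hYN, hYrec⟩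
  have hGint' : ∀ k ≤ N, Integrable (G k) μ := fun k _ => hGint k
  refine ⟨fun M hM => hY.le_condExp_sup' hGadapted hGint' hM hn, ?_⟩
  have hdoob : IsFinMartingale μ ℱ N (doobMartingale μ ℱ Y) :=
    isFinMartingale_doobMartingale (fun _ => hY.stronglyMeasurable hGadapted)
      (fun _ => hY.integrable hGint')
  refine (hY.le_condExp_sup' hGadapted hGint' hdoob hn).antisymm ?_
  refine condExp_le_of_le (ℱ.le n) (hY.stronglyMeasurable hGadapted hn) (hY.integrable hGint' hn)
    ?_ (Eventually.of_forall (hY.sup'_sub_doobMartingale_le hn))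
  exact Integrable.finset_sup' _ fun m hm =>
    ((hGint m).sub (hdoob.2.1 m (Finset.mem_Icc.1 hm).2)).add (hdoob.2.1 n hn)

/-- Strong duality: for every martingale `M` and every `n ≤ N`, a.s.
`Y n ≤ 𝔼[max_{n ≤ m ≤ N} (G m − M m + M n) | ℱ n]`, and for the Doob martingale
`Mstar` of the Snell envelope equality holds a.s.; hence the conditional infimum
of the dual upper bounds over all martingales equals the Snell envelope and is
attained. -/
theorem strong_duality
    {Ω : Type*} {m0 : MeasurableSpace Ω} {μ : Measure Ω} [IsProbabilityMeasure μ]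
    (N : ℕ) (hN : 1 ≤ N) (ℱ : Filtration ℕ m0)
    (G : ℕ → Ω → ℝ) (hGadapted : Adapted ℱ G) (hGint : ∀ n, Integrable (G n) μ)
    (Y : ℕ → Ω → ℝ)
    (hYN : ∀ ω, Y N ω = G N ω)
    (hYrec : ∀ n, n < N → ∀ ω, Y n ω = max (G n ω) ((μ[Y (n + 1)|ℱ n]) ω))
    (Mstar : ℕ → Ω → ℝ)
    (hMstar : ∀ n ω, Mstar n ω = ∑ m ∈ Finset.Icc 1 n, (Y m ω - (μ[Y m|ℱ (m - 1)]) ω))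
    (n : ℕ) (hn : n ≤ N) :
    (∀ M : ℕ → Ω → ℝ, IsFinMartingale μ ℱ N M →
      Y n ≤ᵐ[μ]
        μ[fun ω => (Finset.Icc n N).sup' (Finset.nonempty_Icc.mpr hn)
          (fun m => G m ω - M m ω + M n ω)|ℱ n]) ∧
    Y n =ᵐ[μ]
      μ[fun ω => (Finset.Icc n N).sup' (Finset.nonempty_Icc.mpr hn)
        (fun m => G m ω - Mstar m ω + Mstar n ω)|ℱ n] :=
  strong_duality_general N ℱ G hGadapted hGint Y hYN hYrec Mstar hMstar n hn
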